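/- Let a m : ℕ with 2 ≤ a and 2 ≤ m, and let G be the complete multipartite graph on Fin a × Fin m, in which (i,x) is adjacent to (j,y) iff i ≠ j. Then E(G) = E(Gᶜ) if and only if a = m. Moreover, when a = m, E(G) = 2*m*(m-1). -/

import Mathlib

open Finset

/-- The adjacency matrix of a simple graph over `ℝ` is Hermitian. -/
lemma adjMatrix_isHermitian {V : Type*} [Fintype V] (G : SimpleGraph V) [DecidableRel G.Adj] :
    (G.adjMatrix ℝ).IsHermitian := by
  rw [Matrix.IsHermitian, Matrix.conjTranspose_eq_transpose_of_trivial]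
  exact G.isSymm_adjMatrix

/-- The eigenvalues (with multiplicity) of the real adjacency matrix of a simple graph. -/
noncomputable def adjEig {V : Type*} [Fintype V] [DecidableEq V] (G : SimpleGraph V) : V → ℝ := by
  classical
  exact (adjMatrix_isHermitian G).eigenvalues

/-- The energy of a graph : the sum of the absolute values of its adjacency eigenvalues. -/
noncomputable def energy {V : Type*} [Fintype V] [DecidableEq V] (G : SimpleGraph V) : ℝ :=
  ∑ i, |adjEig G i|

/-- The characteristic polynomial of the real adjacency matrix of a simple graph. -/
noncomputable def charpolyOf {V : Type*} [Fintype V] [DecidableEq V] (G : SimpleGraph V) :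
    Polynomial ℝ := by
  classical
  exact (G.adjMatrix ℝ).charpoly

/-- The complete multipartite graph with `a` parts of size `m`: the graph on
`Fin a × Fin m` where `(i,x)` is adjacent to `(j,y)` iff `i ≠ j`. -/
def completeMultipartiteGraph' (a m : ℕ) : SimpleGraph (Fin a × Fin m) where
  Adj x y := x.1 ≠ y.1
  symm := ⟨fun _ _ h => h.symm⟩
  loopless := ⟨fun _ h => h rfl⟩

/-!
Both graphs are regular and have at most three distinct eigenvalues: writing `B` for the
`0/1` matrix of "same part" and `J` for the all-ones matrix, `K_{a×m}` has adjacency matrix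
`J - B` with spectrum in `{(a-1)m, 0, -m}`, and its complement `a K_m` has adjacency matrix
`B - 1` with spectrum in `{m-1, -1}`. On a set `{k, 0, -β}` the function `|x|` coincides with a
quadratic polynomial, so the energy is a combination of `tr A = 0` and `tr A² = nk`, namely
`2nk / (k + β)`. This gives `E(K_{a×m}) = 2m(a-1)` and `E(a K_m) = 2a(m-1)`.
-/

open Matrix Polynomial

namespace Matrix.IsHermitian

variable {n : Type*} [Fintype n] [DecidableEq n]

theorem eval_eigenvalues_eq_zero {𝕜 : Type*} [RCLike 𝕜] {A : Matrix n n 𝕜}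
    (hA : A.IsHermitian) {p : ℝ[X]} (hp : aeval A p = 0) (i : n) :
    p.eval (hA.eigenvalues i) = 0 := by
  have : Nonempty n := ⟨i⟩
  simpa [hp] using
    spectrum.subset_polynomial_aeval A p ⟨_, hA.eigenvalues_mem_spectrum_real i, rfl⟩

variable {A : Matrix n n ℝ}

theorem trace_mul_self (hA : A.IsHermitian) : (A * A).trace = ∑ i, hA.eigenvalues i ^ 2 := by
  conv_lhs => rw [hA.spectral_theorem, ← map_mul, Unitary.conjStarAlgAut_apply,
    trace_mul_cycle, Unitary.coe_star_mul_self, one_mul, diagonal_mul_diagonal, trace_diagonal]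
  simp [sq]

theorem sum_abs_eigenvalues_of_mul_mul_eq_zero (hA : A.IsHermitian) {α β : ℝ} (hα : 0 ≤ α)
    (hβ : 0 ≤ β) (hαβ : 0 < α + β) (h : A * (A + β • 1) * (A - α • 1) = 0) :
    ∑ i, |hA.eigenvalues i| = ((β - α) * A.trace + 2 * (A * A).trace) / (α + β) := by
  have hroot (i : n) :
      hA.eigenvalues i * (hA.eigenvalues i + β) * (hA.eigenvalues i - α) = 0 := by
    have := hA.eval_eigenvalues_eq_zero (p := X * (X + C β) * (X - C α))
      (by simpa [Algebra.algebraMap_eq_smul_one] using h) i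
    simpa only [Polynomial.eval_mul, Polynomial.eval_add, Polynomial.eval_sub, Polynomial.eval_X,
      Polynomial.eval_C] using this
  -- `|x|` agrees with this quadratic at the three possible eigenvalues `0`, `-β`, `α`
  have habs (i : n) : |hA.eigenvalues i| =
      ((β - α) * hA.eigenvalues i + 2 * hA.eigenvalues i ^ 2) / (α + β) := by
    rw [eq_div_iff hαβ.ne']
    rcases mul_eq_zero.1 (hroot i) with h | h
    · rcases mul_eq_zero.1 h with h | h
      · simp [h]
      · rw [abs_of_nonpos (by linarith)]; nlinarith
    · rw [abs_of_nonneg (by linarith)]; nlinarith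
  simp_rw [habs, ← sum_div, sum_add_distrib, ← mul_sum, hA.trace_mul_self,
    hA.trace_eq_sum_eigenvalues]
  simp

end Matrix.IsHermitian

theorem Matrix.of_one_mul_of_one {n R : Type*} [Fintype n] [Semiring R] :
    (of 1 : Matrix n n R) * of 1 = (Fintype.card n : R) • of 1 := by
  ext i j
  simp [mul_apply]

namespace SimpleGraph

section

variable {V : Type*} [Fintype V] (G : SimpleGraph V) [DecidableRel G.Adj]

theorem trace_adjMatrix_mul_self {α : Type*} [NonAssocSemiring α] :
    (G.adjMatrix α * G.adjMatrix α).trace = ∑ v, (G.degree v : α) :=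
  Finset.sum_congr rfl fun v _ => G.adjMatrix_mul_self_apply_self v

variable [DecidableEq V]

theorem energy_eq_sum_abs_eigenvalues :
    energy G = ∑ i, |(adjMatrix_isHermitian G).eigenvalues i| := by
  unfold energy adjEig
  congr!

variable {G}

theorem IsRegularOfDegree.energy_eq {k : ℕ} (hG : G.IsRegularOfDegree k) {β : ℝ}
    (hβ : 0 ≤ β) (hkβ : 0 < k + β)
    (h : G.adjMatrix ℝ * (G.adjMatrix ℝ + β • 1) * (G.adjMatrix ℝ - (k : ℝ) • 1) = 0) :
    energy G = 2 * Fintype.card V * k / (k + β) := by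
  rw [energy_eq_sum_abs_eigenvalues,
    (adjMatrix_isHermitian G).sum_abs_eigenvalues_of_mul_mul_eq_zero k.cast_nonneg hβ hkβ h,
    trace_adjMatrix, trace_adjMatrix_mul_self]
  simp [hG.degree_eq, mul_assoc]

end

section

variable (a m : ℕ)

def samePartMatrix : Matrix (Fin a × Fin m) (Fin a × Fin m) ℝ :=
  of fun p q => if p.1 = q.1 then 1 else 0

theorem samePartMatrix_mul_self :
    samePartMatrix a m * samePartMatrix a m = (m : ℝ) • samePartMatrix a m := by
  ext p q
  by_cases h : p.1 = q.1 <;>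
    simp [samePartMatrix, mul_apply, Fintype.sum_prod_type_right, -Finset.sum_boole, h]

theorem samePartMatrix_mul_of_one : samePartMatrix a m * of 1 = (m : ℝ) • of 1 := by
  ext p q
  simp [samePartMatrix, mul_apply, Fintype.sum_prod_type_right, -Finset.sum_boole]

theorem of_one_mul_samePartMatrix : of 1 * samePartMatrix a m = (m : ℝ) • of 1 := by
  ext p q
  simp [samePartMatrix, mul_apply, Fintype.sum_prod_type_right, -Finset.sum_boole]

theorem adjMatrix_completeEquipartiteGraph :
    (completeEquipartiteGraph a m).adjMatrix ℝ = of 1 - samePartMatrix a m := by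
  ext p q
  by_cases h : p.1 = q.1 <;> simp [samePartMatrix, h]

theorem adjMatrix_compl_completeEquipartiteGraph :
    (completeEquipartiteGraph a m)ᶜ.adjMatrix ℝ = samePartMatrix a m - 1 := by
  ext p q
  by_cases h : p.1 = q.1 <;> by_cases h' : p = q <;> simp [samePartMatrix, one_apply, h, h']

theorem isRegularOfDegree_completeEquipartiteGraph :
    (completeEquipartiteGraph a m).IsRegularOfDegree ((a - 1) * m) :=
  degree_completeEquipartiteGraph

theorem isRegularOfDegree_compl_completeEquipartiteGraph :
    (completeEquipartiteGraph a m)ᶜ.IsRegularOfDegree (m - 1) := by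
  intro v
  have : m ≤ a * m := Nat.le_mul_of_pos_left m v.1.pos
  rw [(isRegularOfDegree_completeEquipartiteGraph a m).compl.degree_eq, Fintype.card_prod,
    Fintype.card_fin, Fintype.card_fin, Nat.sub_one_mul]
  omega

end

variable {a m : ℕ}

theorem of_one_sub_samePartMatrix_mul_mul_eq_zero :
    (of 1 - samePartMatrix a m) * (of 1 - samePartMatrix a m + (m : ℝ) • 1) *
      (of 1 - samePartMatrix a m - (((a : ℝ) - 1) * m) • 1) = 0 := by
  have hJ : (of 1 : Matrix (Fin a × Fin m) (Fin a × Fin m) ℝ) * of 1 =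
      ((a : ℝ) * m) • of 1 := by
    simp [of_one_mul_of_one]
  have hsq : (of 1 - samePartMatrix a m) * (of 1 - samePartMatrix a m + (m : ℝ) • 1) =
      (((a : ℝ) - 1) * m) • of 1 := by
    simp only [mul_add, sub_mul, mul_sub, hJ, samePartMatrix_mul_self, samePartMatrix_mul_of_one,
      of_one_mul_samePartMatrix, mul_smul_comm, mul_one]
    module
  rw [hsq, smul_mul_assoc, mul_sub, mul_sub, hJ, of_one_mul_samePartMatrix, mul_smul_comm, mul_one]
  module

theorem samePartMatrix_sub_one_mul_mul_eq_zero :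
    (samePartMatrix a m - 1) * (samePartMatrix a m - 1 + (1 : ℝ) • 1) *
      (samePartMatrix a m - 1 - ((m : ℝ) - 1) • 1) = 0 := by
  have : (samePartMatrix a m - 1 + (1 : ℝ) • 1) *
      (samePartMatrix a m - 1 - ((m : ℝ) - 1) • 1) = 0 := by
    simp only [one_smul, sub_add_cancel, mul_sub, samePartMatrix_mul_self, mul_smul_comm, mul_one]
    module
  rw [mul_assoc, this, mul_zero]

theorem energy_completeEquipartiteGraph (ha : 1 ≤ a) (hm : 1 ≤ m) :
    energy (completeEquipartiteGraph a m) = 2 * m * (a - 1) := by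
  have hk : (((a - 1) * m : ℕ) : ℝ) = ((a : ℝ) - 1) * m := by
    rw [Nat.cast_mul, Nat.cast_sub ha, Nat.cast_one]
  have hden : ((a : ℝ) - 1) * m + m = a * m := by ring
  have hpos : (0 : ℝ) < a * m := by positivity
  rw [(isRegularOfDegree_completeEquipartiteGraph a m).energy_eq (β := m) m.cast_nonneg
    (by rwa [hk, hden])
    (by rw [hk, adjMatrix_completeEquipartiteGraph]
        exact of_one_sub_samePartMatrix_mul_mul_eq_zero),
    hk, hden, div_eq_iff hpos.ne', Fintype.card_prod, Fintype.card_fin, Fintype.card_fin]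
  push_cast
  ring

theorem energy_compl_completeEquipartiteGraph (hm : 1 ≤ m) :
    energy (completeEquipartiteGraph a m)ᶜ = 2 * a * (m - 1) := by
  have hk : ((m - 1 : ℕ) : ℝ) = (m : ℝ) - 1 := by rw [Nat.cast_sub hm, Nat.cast_one]
  have hpos : (0 : ℝ) < m := by positivity
  rw [(isRegularOfDegree_compl_completeEquipartiteGraph a m).energy_eq zero_le_one
    (by rwa [hk, sub_add_cancel])
    (by rw [hk, adjMatrix_compl_completeEquipartiteGraph]
        exact samePartMatrix_sub_one_mul_mul_eq_zero),
    hk, sub_add_cancel, div_eq_iff hpos.ne', Fintype.card_prod, Fintype.card_fin, Fintype.card_fin]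
  push_cast
  ring

end SimpleGraph

theorem completeMultipartiteGraph'_eq_completeEquipartiteGraph (a m : ℕ) :
    completeMultipartiteGraph' a m = SimpleGraph.completeEquipartiteGraph a m :=
  rfl

/-- The complete multipartite graph `K_{a×m}` (with `a, m ≥ 2`) is
equienergetic with its complement iff `a = m`, in which case its energy is `2m(m-1)`. -/
theorem completeMultipartite_equienergetic_iff (a m : ℕ) (ha : 2 ≤ a) (hm : 2 ≤ m) :
    (energy (completeMultipartiteGraph' a m) = energy (completeMultipartiteGraph' a m)ᶜ ↔
      a = m) ∧
    (a = m → energy (completeMultipartiteGraph' a m) = 2 * (m : ℝ) * ((m : ℝ) - 1)) := by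
  rw [completeMultipartiteGraph'_eq_completeEquipartiteGraph,
    SimpleGraph.energy_completeEquipartiteGraph (by omega) (by omega),
    SimpleGraph.energy_compl_completeEquipartiteGraph (by omega)]
  refine ⟨⟨fun h => ?_, fun h => by subst h; ring⟩, fun h => by subst h; ring⟩
  exact_mod_cast (by linarith : (a : ℝ) = m)
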